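/- arXiv:2501.05699 — 2 statements merged into one kernel-verified Lean document; each statement's English description precedes it below -/
import Mathlib

section
/- Let Ω ⊆ ℝⁿ be an open set, h : Ω → GL(r,ℝ) a C² map taking values in symmetric positive definite matrices (a metric on the trivial rank-r bundle), and φ : Ω → ℝ a C² function. Define the curvature-type operator Θ^{(E,h)} acting on E-valued p-forms s = (s¹,...,sʳ) by (Θ^{(E,h)} s)^i = −Σ_{j,k} dh^{ij} ∧ (∇h_{jk} ⌟ s^k) − Σ_{j,k} h^{ij} F_{h_{jk}} s^k, where (h^{ij}) is the inverse matrix of (h_{ij}). Then Θ^{(E, h e^{−φ})} = Θ^{(E,h)} + F_φ, where F_φ u = Σ_{i,j} φ_{ij} dx_i ∧ (∂_j ⌟ u) acts diagonally on the components. -/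
open scoped RealInnerProductSpace

noncomputable section

abbrev Euc (n : ℕ) := EuclideanSpace ℝ (Fin n)

namespace Forms

/-- Concrete model of `p`-covectors on ℝⁿ: arrays of coefficients. -/
abbrev Form (n p : ℕ) := (Fin p → Fin n) → ℝ

/-- A coefficient array is alternating if it changes by the sign of a permutation of the
indices. -/
def IsAlternating {n p : ℕ} (u : Form n p) : Prop :=
  ∀ (σ : Equiv.Perm (Fin p)) (I : Fin p → Fin n), u (I ∘ σ) = (Equiv.Perm.sign σ : ℤ) * u I

/-- The standard inner product on `p`-covectors: `⟨u,v⟩ = (1/p!) Σ_I u_I v_I`. -/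
def formInner {n p : ℕ} (u v : Form n p) : ℝ :=
  (p.factorial : ℝ)⁻¹ * ∑ I : Fin p → Fin n, u I * v I

/-- Exterior multiplication by the basis covector `dxᵢ`. -/
def wedge1 {n p : ℕ} (i : Fin n) (u : Form n p) : Form n (p + 1) :=
  fun I => ∑ k : Fin (p + 1),
    (-1 : ℝ) ^ (k : ℕ) * (if I k = i then 1 else 0) * u (I ∘ k.succAbove)

/-- Exterior multiplication by the covector with coefficients `w`. -/
def wedgeV {n p : ℕ} (w : Fin n → ℝ) (u : Form n p) : Form n (p + 1) :=
  fun I => ∑ k : Fin (p + 1), (-1 : ℝ) ^ (k : ℕ) * w (I k) * u (I ∘ k.succAbove)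

/-- Interior product (contraction) with the basis vector `∂ⱼ`. -/
def interior1 {n p : ℕ} (j : Fin n) (u : Form n (p + 1)) : Form n p :=
  fun I => u (Fin.cons j I)

/-- Interior product with the vector with coefficients `v`. -/
def interiorV {n p : ℕ} (v : Fin n → ℝ) (u : Form n (p + 1)) : Form n p :=
  fun I => ∑ j : Fin n, v j * u (Fin.cons j I)

/-- The Hessian-type operator `F_A u = Σᵢⱼ Aᵢⱼ dxᵢ ∧ (∂ⱼ ⌟ u)`. -/
def Fop {n p : ℕ} (A : Matrix (Fin n) (Fin n) ℝ) (u : Form n (p + 1)) : Form n (p + 1) :=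
  fun I => ∑ i : Fin n, ∑ j : Fin n, A i j * wedge1 i (interior1 j u) I

/-- The Hessian matrix of a scalar function. -/
def hess {n : ℕ} (φ : Euc n → ℝ) (x : Euc n) : Matrix (Fin n) (Fin n) ℝ :=
  Matrix.of fun i j =>
    iteratedFDeriv ℝ 2 φ x ![EuclideanSpace.single i 1, EuclideanSpace.single j 1]

/-- The exterior derivative of a `p`-form-valued field. -/
def extD {n p : ℕ} (f : Euc n → Form n p) (x : Euc n) : Form n (p + 1) :=
  fun I => ∑ k : Fin (p + 1),
    (-1 : ℝ) ^ (k : ℕ) *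
      fderiv ℝ (fun y => f y (I ∘ k.succAbove)) x (EuclideanSpace.single (I k) 1)

end Forms

namespace Forms

/-- The coefficients of the differential `dg` of a scalar function (equivalently, of its
gradient vector field) at `x`. -/
def dcoef {n : ℕ} (g : Euc n → ℝ) (x : Euc n) : Fin n → ℝ :=
  fun l => fderiv ℝ g x (EuclideanSpace.single l 1)

/-- The curvature-type operator `Θ^{(E,h)}` of a metric `h` on the trivial rank-`r` bundle,
acting on an `ℝʳ`-valued `(p+1)`-form `s = (s¹,…,sʳ)`:
`(Θ^{(E,h)} s)ⁱ = −Σ_{j,k} dhⁱʲ ∧ (∇h_{jk} ⌟ sᵏ) − Σ_{j,k} hⁱʲ F_{h_{jk}} sᵏ`. -/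
def Theta {n r p : ℕ} (h : Euc n → Matrix (Fin r) (Fin r) ℝ)
    (s : Fin r → Euc n → Form n (p + 1)) (x : Euc n) : Fin r → Form n (p + 1) :=
  fun i I =>
    -(∑ j : Fin r, ∑ k : Fin r,
        wedgeV (dcoef (fun y => (h y)⁻¹ i j) x)
          (interiorV (dcoef (fun y => h y j k) x) (s k x)) I)
    - ∑ j : Fin r, ∑ k : Fin r,
        (h x)⁻¹ i j * Fop (hess (fun y => h y j k) x) (s k x) I

end Forms

/-!
Both terms of `Θ` are Hessian-type operators: `dhⁱʲ ∧ (∇h_{jk} ⌟ ·) = F_{dhⁱʲ ⊗ dh_{jk}}`, so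
`(Θ^{(E,h)} s)ⁱ = −Σₖ F_{Aᵢₖ} sᵏ` with `Aᵢₖ = Σⱼ (dhⁱʲ ⊗ dh_{jk} + hⁱʲ Hess h_{jk})`, and `F_A` is
linear in `A`. The theorem thus reduces to the matrix identity
`Aᵢₖ(h e^{−φ}) = Aᵢₖ(h) − δᵢₖ Hess φ`. Expanding with the product rule, the `dφ ⊗ dφ` terms
cancel, the mixed terms collect into `Σⱼ (hⁱʲ dh_{jk} + h_{jk} dhⁱʲ) ⊗ dφ = d(δᵢₖ) ⊗ dφ = 0`, and
what is left is `−Σⱼ hⁱʲ h_{jk} Hess φ = −δᵢₖ Hess φ`.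
-/

theorem Matrix.inv_smul_of_ne_zero {m K : Type*} [Fintype m] [DecidableEq m] [Field K] {c : K}
    (hc : c ≠ 0) (M : Matrix m m K) : (c • M)⁻¹ = c⁻¹ • M⁻¹ := by
  by_cases hM : IsUnit M.det
  · exact Matrix.inv_smul' M (Units.mk0 c hc) hM
  · have hcM : ¬IsUnit (c • M).det := by
      rw [Matrix.det_smul, isUnit_iff_ne_zero] at *
      simpa [hc] using hM
    rw [Matrix.nonsing_inv_apply_not_isUnit _ hM, Matrix.nonsing_inv_apply_not_isUnit _ hcM,
      smul_zero]

theorem Matrix.sum_vecMulVec {ι m n α : Type*} [NonUnitalNonAssocSemiring α] (t : Finset ι)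
    (v : ι → m → α) (w : n → α) :
    ∑ a ∈ t, vecMulVec (v a) w = vecMulVec (∑ a ∈ t, v a) w := by
  ext i j
  simp [Matrix.vecMulVec_apply, Matrix.sum_apply, Finset.sum_mul]

section MatrixSmoothness

variable {𝕜 E m : Type*} [NontriviallyNormedField 𝕜] [NormedAddCommGroup E] [NormedSpace 𝕜 E]
  [Fintype m] [DecidableEq m] {N : WithTop ℕ∞} {M : E → Matrix m m 𝕜} {x : E}

theorem contDiffAt_det (hM : ∀ a b, ContDiffAt 𝕜 N (fun y => M y a b) x) :
    ContDiffAt 𝕜 N (fun y => (M y).det) x := by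
  simp only [Matrix.det_apply']
  exact ContDiffAt.sum fun σ _ => contDiffAt_const.mul (contDiffAt_prod fun a _ => hM (σ a) a)

theorem contDiffAt_inv_apply (hM : ∀ a b, ContDiffAt 𝕜 N (fun y => M y a b) x)
    (hdet : (M x).det ≠ 0) (i j : m) : ContDiffAt 𝕜 N (fun y => (M y)⁻¹ i j) x := by
  have hcramer : (fun y => (M y)⁻¹ i j)
      = fun y => ((M y).det)⁻¹ * ((M y).updateRow j (Pi.single i 1)).det := by
    funext y
    rw [Matrix.inv_def, Matrix.smul_apply, Ring.inverse_eq_inv, Matrix.adjugate_apply, smul_eq_mul]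
  rw [hcramer]
  refine ((contDiffAt_det hM).inv hdet).mul (contDiffAt_det fun a b => ?_)
  by_cases hab : a = j
  · simp only [Matrix.updateRow_apply, if_pos hab]
    exact contDiffAt_const
  · simp only [Matrix.updateRow_apply, if_neg hab]
    exact hM a b

end MatrixSmoothness

namespace Forms

open Matrix Filter Topology

section Algebra

variable {n p : ℕ}

theorem Fop_apply (A : Matrix (Fin n) (Fin n) ℝ) (u : Form n (p + 1)) (I : Fin (p + 1) → Fin n) :
    Fop A u I = ∑ k : Fin (p + 1), ∑ j : Fin n,
      (-1 : ℝ) ^ (k : ℕ) * A (I k) j * u (Fin.cons j (I ∘ k.succAbove)) := by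
  simp only [Fop, wedge1, interior1, Finset.mul_sum]
  -- reorder the sums over `(i, j, k)` as `(k, j, i)`; the `i`-sum then collapses at `i = I k`
  rw [Finset.sum_comm]
  refine ((Finset.sum_congr rfl fun j _ => Finset.sum_comm).trans Finset.sum_comm).trans
    (Finset.sum_congr rfl fun k _ => Finset.sum_congr rfl fun j _ => ?_)
  simp [mul_ite, ite_mul]
  ring

theorem wedgeV_interiorV (v w : Fin n → ℝ) (u : Form n (p + 1)) :
    wedgeV v (interiorV w u) = Fop (vecMulVec v w) u := by
  ext I
  simp only [Fop_apply, wedgeV, interiorV, vecMulVec_apply, Finset.mul_sum]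
  exact Finset.sum_congr rfl fun k _ => Finset.sum_congr rfl fun j _ => by ring

theorem Fop_add (A B : Matrix (Fin n) (Fin n) ℝ) (u : Form n (p + 1)) :
    Fop (A + B) u = Fop A u + Fop B u := by
  ext I
  simp [Fop, add_mul, Finset.sum_add_distrib]

theorem Fop_smul (c : ℝ) (A : Matrix (Fin n) (Fin n) ℝ) (u : Form n (p + 1)) :
    Fop (c • A) u = c • Fop A u := by
  ext I
  simp [Fop, Finset.mul_sum, mul_assoc]

theorem Fop_sub (A B : Matrix (Fin n) (Fin n) ℝ) (u : Form n (p + 1)) :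
    Fop (A - B) u = Fop A u - Fop B u := by
  ext I
  simp [Fop, sub_mul, Finset.sum_sub_distrib]

theorem Fop_sum {ι : Type*} (t : Finset ι) (A : ι → Matrix (Fin n) (Fin n) ℝ) (u : Form n (p + 1)) :
    Fop (∑ a ∈ t, A a) u = ∑ a ∈ t, Fop (A a) u := by
  classical
  induction t using Finset.induction_on with
  | empty => ext I; simp [Fop]
  | insert a t ha ih => rw [Finset.sum_insert ha, Finset.sum_insert ha, Fop_add, ih]

end Algebra

def hessPair {n : ℕ} (a b : Euc n → ℝ) (x : Euc n) : Matrix (Fin n) (Fin n) ℝ :=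
  vecMulVec (dcoef a x) (dcoef b x) + a x • hess b x

def thetaCoeff {n r : ℕ} (h : Euc n → Matrix (Fin r) (Fin r) ℝ) (x : Euc n) (i k : Fin r) :
    Matrix (Fin n) (Fin n) ℝ :=
  ∑ j, hessPair (fun y => (h y)⁻¹ i j) (fun y => h y j k) x

theorem Theta_eq_neg_sum_Fop {n r p : ℕ} (h : Euc n → Matrix (Fin r) (Fin r) ℝ)
    (s : Fin r → Euc n → Form n (p + 1)) (x : Euc n) (i : Fin r) :
    Theta h s x i = -∑ k, Fop (thetaCoeff h x i k) (s k x) := by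
  ext I
  simp only [Theta, thetaCoeff, hessPair, wedgeV_interiorV, Fop_sum, Fop_add, Fop_smul,
    Finset.sum_apply, Pi.neg_apply, Pi.add_apply, Pi.smul_apply, smul_eq_mul]
  conv_rhs => rw [Finset.sum_comm]
  simp only [Finset.sum_add_distrib]
  ring

section Calculus

variable {n : ℕ} {f g : Euc n → ℝ} {x : Euc n}

theorem dcoef_congr (hfg : f =ᶠ[𝓝 x] g) : dcoef f x = dcoef g x := by
  unfold dcoef
  rw [hfg.fderiv_eq]

theorem dcoef_const (c : ℝ) : dcoef (fun _ : Euc n => c) x = 0 := by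
  ext l
  simp [dcoef]

theorem dcoef_neg : dcoef (fun y => -f y) x = -dcoef f x := by
  ext l
  simp [dcoef, fderiv_fun_neg]

theorem dcoef_add (hf : DifferentiableAt ℝ f x) (hg : DifferentiableAt ℝ g x) :
    dcoef (fun y => f y + g y) x = dcoef f x + dcoef g x := by
  ext l
  simp [dcoef, fderiv_fun_add hf hg]

theorem dcoef_mul (hf : DifferentiableAt ℝ f x) (hg : DifferentiableAt ℝ g x) :
    dcoef (fun y => f y * g y) x = f x • dcoef g x + g x • dcoef f x := by
  ext l
  simp [dcoef, fderiv_fun_mul hf hg]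

theorem dcoef_exp (hf : DifferentiableAt ℝ f x) :
    dcoef (fun y => Real.exp (f y)) x = Real.exp (f x) • dcoef f x := by
  ext l
  simp [dcoef, fderiv_exp hf]

theorem dcoef_sum {ι : Type*} (t : Finset ι) {F : ι → Euc n → ℝ}
    (hF : ∀ a ∈ t, DifferentiableAt ℝ (F a) x) :
    dcoef (fun y => ∑ a ∈ t, F a y) x = ∑ a ∈ t, dcoef (F a) x := by
  ext l
  simp [dcoef, fderiv_fun_sum hF]

theorem differentiableAt_fderiv (hf : ContDiffAt ℝ 2 f x) : DifferentiableAt ℝ (fderiv ℝ f) x :=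
  (hf.fderiv_right (by norm_num : (1 : WithTop ℕ∞) + 1 ≤ 2)).differentiableAt one_ne_zero

theorem differentiableAt_dcoef (hf : ContDiffAt ℝ 2 f x) (m : Fin n) :
    DifferentiableAt ℝ (fun y => dcoef f y m) x :=
  (differentiableAt_fderiv hf).clm_apply (differentiableAt_const _)

theorem hess_apply (hf : ContDiffAt ℝ 2 f x) (l m : Fin n) :
    hess f x l m = dcoef (fun y => dcoef f y m) x l := by
  simp [hess, dcoef, iteratedFDeriv_two_apply,
    fderiv_clm_apply (differentiableAt_fderiv hf) (differentiableAt_const _)]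

theorem hess_neg : hess (fun y => -f y) x = -hess f x := by
  ext l m
  simp [hess, ← Pi.neg_def, iteratedFDeriv_neg_apply]

theorem hess_mul (hf : ContDiffAt ℝ 2 f x) (hg : ContDiffAt ℝ 2 g x) :
    hess (fun y => f y * g y) x = f x • hess g x + vecMulVec (dcoef f x) (dcoef g x)
      + vecMulVec (dcoef g x) (dcoef f x) + g x • hess f x := by
  ext l m
  have hleibniz : (fun y => dcoef (fun z => f z * g z) y m)
      =ᶠ[𝓝 x] fun y => f y * dcoef g y m + g y * dcoef f y m := by
    filter_upwards [hf.eventually (by simp), hg.eventually (by simp)] with y hfy hgy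
    simp [dcoef_mul (hfy.differentiableAt two_ne_zero) (hgy.differentiableAt two_ne_zero)]
  have hdf := hf.differentiableAt two_ne_zero
  have hdg := hg.differentiableAt two_ne_zero
  have hdf' := differentiableAt_dcoef hf m
  have hdg' := differentiableAt_dcoef hg m
  rw [hess_apply (hf.mul hg), dcoef_congr hleibniz, dcoef_add (hdf.fun_mul hdg') (hdg.fun_mul hdf'),
    dcoef_mul hdf hdg', dcoef_mul hdg hdf']
  simp only [Pi.add_apply, Pi.smul_apply, smul_eq_mul, Matrix.add_apply, Matrix.smul_apply,
    vecMulVec_apply, hess_apply hf, hess_apply hg]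
  ring

theorem hess_exp (hf : ContDiffAt ℝ 2 f x) :
    hess (fun y => Real.exp (f y)) x
      = Real.exp (f x) • (vecMulVec (dcoef f x) (dcoef f x) + hess f x) := by
  ext l m
  have hchain : (fun y => dcoef (fun z => Real.exp (f z)) y m)
      =ᶠ[𝓝 x] fun y => Real.exp (f y) * dcoef f y m := by
    filter_upwards [hf.eventually (by simp)] with y hfy
    simp [dcoef_exp (hfy.differentiableAt two_ne_zero)]
  have hdf := hf.differentiableAt two_ne_zero
  rw [hess_apply hf.exp, dcoef_congr hchain, dcoef_mul hdf.exp (differentiableAt_dcoef hf m),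
    dcoef_exp hdf]
  simp only [Pi.add_apply, Pi.smul_apply, smul_eq_mul, Matrix.add_apply, Matrix.smul_apply,
    vecMulVec_apply, hess_apply hf]
  ring

end Calculus

section Conformal

variable {n r : ℕ} {φ g : Euc n → ℝ} {x : Euc n}

theorem dcoef_exp_mul (hφ : DifferentiableAt ℝ φ x) (hg : DifferentiableAt ℝ g x) :
    dcoef (fun y => Real.exp (φ y) * g y) x = Real.exp (φ x) • (dcoef g x + g x • dcoef φ x) := by
  rw [dcoef_mul hφ.exp hg, dcoef_exp hφ, smul_add, smul_comm (g x)]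

theorem dcoef_exp_neg_mul (hφ : DifferentiableAt ℝ φ x) (hg : DifferentiableAt ℝ g x) :
    dcoef (fun y => Real.exp (-φ y) * g y) x
      = Real.exp (-φ x) • (dcoef g x - g x • dcoef φ x) := by
  rw [dcoef_exp_mul hφ.fun_neg hg, dcoef_neg, smul_neg, sub_eq_add_neg]

theorem hess_exp_neg_mul (hφ : ContDiffAt ℝ 2 φ x) (hg : ContDiffAt ℝ 2 g x) :
    hess (fun y => Real.exp (-φ y) * g y) x
      = Real.exp (-φ x) • (hess g x - vecMulVec (dcoef φ x) (dcoef g x)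
          - vecMulVec (dcoef g x) (dcoef φ x)
          + g x • (vecMulVec (dcoef φ x) (dcoef φ x) - hess φ x)) := by
  have hdφ := hφ.differentiableAt two_ne_zero
  rw [hess_mul hφ.neg.exp hg, hess_exp hφ.neg, dcoef_exp hdφ.fun_neg, dcoef_neg, hess_neg]
  ext l m
  simp only [Matrix.add_apply, Matrix.sub_apply, Matrix.smul_apply, Matrix.neg_apply,
    vecMulVec_apply, Pi.smul_apply, Pi.neg_apply, smul_eq_mul]
  ring

/-- The derivative of `Σⱼ hⁱʲ h_{jk} = δᵢₖ`, an identity on a neighbourhood of `x`. -/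
theorem sum_dcoef_inv_mul_self {h : Euc n → Matrix (Fin r) (Fin r) ℝ}
    (hh : ∀ a b, ContDiffAt ℝ 1 (fun y => h y a b) x) (hdet : (h x).det ≠ 0) (i k : Fin r) :
    ∑ j, ((h x)⁻¹ i j • dcoef (fun y => h y j k) x + h x j k • dcoef (fun y => (h y)⁻¹ i j) x)
      = 0 := by
  have hunit : ∀ᶠ y in 𝓝 x, IsUnit (h y).det :=
    ((contDiffAt_det hh).continuousAt.eventually_ne hdet).mono fun y hy => hy.isUnit
  have hconst : (fun y => ∑ j, (h y)⁻¹ i j * h y j k) =ᶠ[𝓝 x] fun _ => (1 : Matrix _ _ ℝ) i k :=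
    hunit.mono fun y hy => by dsimp only; rw [← Matrix.mul_apply, nonsing_inv_mul _ hy]
  have hdinv : ∀ j, DifferentiableAt ℝ (fun y => (h y)⁻¹ i j) x := fun j =>
    (contDiffAt_inv_apply hh hdet i j).differentiableAt one_ne_zero
  have hdh : ∀ j, DifferentiableAt ℝ (fun y => h y j k) x := fun j =>
    (hh j k).differentiableAt one_ne_zero
  have := dcoef_congr hconst
  rwa [dcoef_const, dcoef_sum _ fun j _ => (hdinv j).fun_mul (hdh j),
    Finset.sum_congr rfl fun j _ => dcoef_mul (hdinv j) (hdh j)] at this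

theorem hessPair_exp_mul_exp_neg_mul {a b : Euc n → ℝ} (hφ : ContDiffAt ℝ 2 φ x)
    (ha : DifferentiableAt ℝ a x) (hb : ContDiffAt ℝ 2 b x) :
    hessPair (fun y => Real.exp (φ y) * a y) (fun y => Real.exp (-φ y) * b y) x
      = hessPair a b x - vecMulVec (a x • dcoef b x + b x • dcoef a x) (dcoef φ x)
        - (a x * b x) • hess φ x := by
  have hdφ := hφ.differentiableAt two_ne_zero
  rw [hessPair, hessPair, dcoef_exp_mul hdφ ha,
    dcoef_exp_neg_mul hdφ (hb.differentiableAt two_ne_zero), hess_exp_neg_mul hφ hb]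
  ext l m
  simp only [Matrix.add_apply, Matrix.sub_apply, Matrix.smul_apply, vecMulVec_apply,
    Pi.add_apply, Pi.sub_apply, Pi.smul_apply, smul_eq_mul, Real.exp_neg]
  field_simp
  ring

theorem thetaCoeff_exp_neg_smul {h : Euc n → Matrix (Fin r) (Fin r) ℝ}
    (hφ : ContDiffAt ℝ 2 φ x) (hh : ∀ a b, ContDiffAt ℝ 2 (fun y => h y a b) x)
    (hdet : (h x).det ≠ 0) (i k : Fin r) :
    thetaCoeff (fun y => Real.exp (-φ y) • h y) x i k
      = thetaCoeff h x i k - (1 : Matrix (Fin r) (Fin r) ℝ) i k • hess φ x := by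
  have hinv_smul : ∀ j, (fun y => (Real.exp (-φ y) • h y)⁻¹ i j)
      = fun y => Real.exp (φ y) * (h y)⁻¹ i j := fun j => by
    funext y
    rw [Matrix.inv_smul_of_ne_zero (Real.exp_ne_zero _), ← Real.exp_neg, neg_neg]
    rfl
  have hone : ∑ j, (h x)⁻¹ i j * h x j k = (1 : Matrix (Fin r) (Fin r) ℝ) i k := by
    rw [← Matrix.mul_apply, nonsing_inv_mul _ (isUnit_iff_ne_zero.2 hdet)]
  have hsummand : ∀ j, hessPair (fun y => (Real.exp (-φ y) • h y)⁻¹ i j)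
      (fun y => (Real.exp (-φ y) • h y) j k) x
      = hessPair (fun y => (h y)⁻¹ i j) (fun y => h y j k) x
        - vecMulVec ((h x)⁻¹ i j • dcoef (fun y => h y j k) x
            + h x j k • dcoef (fun y => (h y)⁻¹ i j) x) (dcoef φ x)
        - ((h x)⁻¹ i j * h x j k) • hess φ x := fun j => by
    rw [hinv_smul]
    exact hessPair_exp_mul_exp_neg_mul hφ
      ((contDiffAt_inv_apply hh hdet i j).differentiableAt two_ne_zero) (hh j k)
  rw [thetaCoeff, thetaCoeff, Finset.sum_congr rfl fun j _ => hsummand j, Finset.sum_sub_distrib,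
    Finset.sum_sub_distrib, Matrix.sum_vecMulVec, ← Finset.sum_smul, hone,
    sum_dcoef_inv_mul_self (fun a b => (hh a b).of_le one_le_two) hdet i k, zero_vecMulVec,
    sub_zero]

end Conformal

end Forms

theorem theta_conformal_change_general {n r p : ℕ}
    (Ω : Set (Euc n)) (hΩ : IsOpen Ω)
    (h : Euc n → Matrix (Fin r) (Fin r) ℝ)
    (hsmooth : ∀ j k : Fin r, ContDiffOn ℝ 2 (fun y => h y j k) Ω)
    (hpos : ∀ x ∈ Ω, (h x).PosDef)
    (φ : Euc n → ℝ) (hφ : ContDiffOn ℝ 2 φ Ω)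
    (s : Fin r → Euc n → Forms.Form n (p + 1))
    (x : Euc n) (hx : x ∈ Ω) (i : Fin r) (I : Fin (p + 1) → Fin n) :
    Forms.Theta (fun y => Real.exp (-φ y) • h y) s x i I
      = Forms.Theta h s x i I + Forms.Fop (Forms.hess φ x) (s i x) I := by
  have hnhds : Ω ∈ nhds x := hΩ.mem_nhds hx
  have hcoeff := Forms.thetaCoeff_exp_neg_smul (hφ.contDiffAt hnhds)
    (fun a b => (hsmooth a b).contDiffAt hnhds) (hpos x hx).det_pos.ne' i
  simp only [Forms.Theta_eq_neg_sum_Fop, hcoeff, Forms.Fop_sub, Forms.Fop_smul,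
    Finset.sum_sub_distrib]
  simp [Matrix.one_apply]
  ring

/-- For a `C²` metric `h` on the trivial rank-`r` bundle over an open set
`Ω ⊆ ℝⁿ` and a `C²` weight `φ`, the curvature operators satisfy
`Θ^{(E, h e^{−φ})} = Θ^{(E,h)} + F_φ` (with `F_φ` acting diagonally on the components). -/
theorem theta_conformal_change {n r p : ℕ}
    (Ω : Set (Euc n)) (hΩ : IsOpen Ω)
    (h : Euc n → Matrix (Fin r) (Fin r) ℝ)
    (hsmooth : ∀ j k : Fin r, ContDiffOn ℝ 2 (fun y => h y j k) Ω)
    (hsym : ∀ x ∈ Ω, (h x).IsSymm) (hpos : ∀ x ∈ Ω, (h x).PosDef)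
    (φ : Euc n → ℝ) (hφ : ContDiffOn ℝ 2 φ Ω)
    (s : Fin r → Euc n → Forms.Form n (p + 1))
    (hs : ∀ k : Fin r, ∀ y : Euc n, Forms.IsAlternating (s k y))
    (x : Euc n) (hx : x ∈ Ω) (i : Fin r) (I : Fin (p + 1) → Fin n) :
    Forms.Theta (fun y => Real.exp (-φ y) • h y) s x i I
      = Forms.Theta h s x i I + Forms.Fop (Forms.hess φ x) (s i x) I :=
  theta_conformal_change_general Ω hΩ h hsmooth hpos φ hφ s x hx i I
end
end

section
/- (Prékopa's theorem, scalar case.) Let φ : ℝᵐ × ℝⁿ → ℝ be a convex function, and define ψ : ℝᵐ → ℝ ∪ {−∞} by e^{−ψ(x)} = ∫_{ℝⁿ} e^{−φ(x,y)} dy, assuming the integral is finite for all x. Then ψ is convex on ℝᵐ. -/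
/-!
Prékopa's theorem is the Prékopa–Leindler inequality applied in the fibre variable: if
`f y ^ a * g z ^ b ≤ h (a • y + b • z)` for all `y, z`, then `(∫ f) ^ a * (∫ g) ^ b ≤ ∫ h`.
For `f = e^{-φ(x₀, ·)}`, `g = e^{-φ(x₁, ·)}`, `h = e^{-φ(a x₀ + b x₁, ·)}` the hypothesis is
exactly the convexity of `φ`, and the conclusion reads `e^{-ψ(a x₀ + b x₁)} ≥ e^{-a ψ x₀ - b ψ x₁}`.

The inequality passes to products by Fubini, hence to `ℝⁿ` from `ℝ`. On `ℝ`, once `f` and `g`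
are normalized to have supremum `1`, the superlevel sets satisfy
`a • {f > t} + b • {g > t} ⊆ {h > t}` for `t < 1`, so the one-dimensional Brunn–Minkowski
inequality `|A| + |B| ≤ |A + B|` and the layer-cake formula give
`a ∫ f + b ∫ g ≤ ∫ h`, and AM–GM finishes. Unbounded `f`, `g` are handled by truncation.
-/

open MeasureTheory Set
open scoped ENNReal Pointwise

namespace ENNReal

theorem min_le_rpow_mul_rpow {a b : ℝ} (ha : 0 ≤ a) (hb : 0 ≤ b) (hab : a + b = 1)
    (x y : ℝ≥0∞) : min x y ≤ x ^ a * y ^ b :=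
  calc min x y = min x y ^ a * min x y ^ b := by
        rw [← rpow_add_of_nonneg _ _ ha hb, hab, rpow_one]
    _ ≤ x ^ a * y ^ b := by gcongr <;> simp

theorem geom_mean_le_arith_mean2_weighted {w₁ w₂ : ℝ} (hw₁ : 0 ≤ w₁) (hw₂ : 0 ≤ w₂)
    (hw : w₁ + w₂ = 1) (p₁ p₂ : ℝ≥0∞) :
    p₁ ^ w₁ * p₂ ^ w₂ ≤ ENNReal.ofReal w₁ * p₁ + ENNReal.ofReal w₂ * p₂ := by
  rcases hw₁.eq_or_lt with rfl | hw₁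
  · simp_all
  rcases hw₂.eq_or_lt with rfl | hw₂
  · simp_all
  rcases eq_top_or_lt_top p₁ with rfl | hp₁
  · simp [hw₁]
  rcases eq_top_or_lt_top p₂ with rfl | hp₂
  · simp [hw₂]
  rw [← ofReal_toReal hp₁.ne, ← ofReal_toReal hp₂.ne,
    ofReal_rpow_of_nonneg toReal_nonneg hw₁.le, ofReal_rpow_of_nonneg toReal_nonneg hw₂.le,
    ← ofReal_mul (by positivity), ← ofReal_mul hw₁.le, ← ofReal_mul hw₂.le,
    ← ofReal_add (by positivity) (by positivity)]
  exact ofReal_le_ofReal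
    (Real.geom_mean_le_arith_mean2_weighted hw₁.le hw₂.le toReal_nonneg toReal_nonneg hw)

theorem iSup_rpow {ι : Sort*} (f : ι → ℝ≥0∞) {p : ℝ} (hp : 0 < p) :
    (⨆ i, f i) ^ p = ⨆ i, f i ^ p :=
  (orderIsoRpow p hp).map_iSup f

end ENNReal

theorem Real.volume_setOf_ofReal_lt_inter_Ioi (x : ℝ≥0∞) :
    volume ({t : ℝ | ENNReal.ofReal t < x} ∩ Ioi 0) = x := by
  rcases eq_top_or_lt_top x with rfl | hx
  · simp
  · have : {t : ℝ | ENNReal.ofReal t < x} ∩ Ioi 0 = Ioo 0 x.toReal := by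
      ext t
      simp only [mem_inter_iff, mem_ofPred_eq, mem_Ioi, mem_Ioo]
      constructor
      · rintro ⟨h, ht⟩
        exact ⟨ht, (ENNReal.ofReal_lt_iff_lt_toReal ht.le hx.ne).mp h⟩
      · rintro ⟨ht, h⟩
        exact ⟨(ENNReal.ofReal_lt_iff_lt_toReal ht.le hx.ne).mpr h, ht⟩
    rw [this, Real.volume_Ioo, sub_zero, ENNReal.ofReal_toReal hx.ne]

theorem lintegral_eq_lintegral_meas_ofReal_lt {α : Type*} [MeasurableSpace α] (μ : Measure α)
    [SFinite μ] {f : α → ℝ≥0∞} (hf : Measurable f) :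
    ∫⁻ x, f x ∂μ = ∫⁻ t in Ioi 0, μ {x | ENNReal.ofReal t < f x} := by
  have hS : MeasurableSet {p : α × ℝ | ENNReal.ofReal p.2 < f p.1} :=
    measurableSet_lt (ENNReal.measurable_ofReal.comp measurable_snd) (hf.comp measurable_fst)
  calc ∫⁻ x, f x ∂μ = (μ.prod (volume.restrict (Ioi 0))) {p | ENNReal.ofReal p.2 < f p.1} := by
        rw [Measure.prod_apply hS]
        refine lintegral_congr fun x => ?_
        rw [Measure.restrict_apply' measurableSet_Ioi]
        exact (Real.volume_setOf_ofReal_lt_inter_Ioi (f x)).symm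
    _ = ∫⁻ t in Ioi 0, μ {x | ENNReal.ofReal t < f x} := Measure.prod_apply_symm hS

namespace Real

theorem volume_add_volume_le_volume_add_of_isCompact {K L : Set ℝ} (hK : IsCompact K)
    (hL : IsCompact L) (hK₀ : K.Nonempty) (hL₀ : L.Nonempty) :
    volume K + volume L ≤ volume (K + L) := by
  -- `sSup K +ᵥ L` and `sInf L +ᵥ K` lie in `K + L` and meet only at `sSup K + sInf L`.
  set a := sSup K
  set b := sInf L
  have haK : a ∈ K := hK.sSup_mem hK₀
  have hbL : b ∈ L := hL.sInf_mem hL₀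
  have hsub : (a +ᵥ L) ∪ (b +ᵥ K) ⊆ K + L := by
    rintro _ (⟨l, hl, rfl⟩ | ⟨k, hk, rfl⟩)
    · exact add_mem_add haK hl
    · exact ⟨k, hk, b, hbL, add_comm _ _⟩
  have hinter : (a +ᵥ L) ∩ (b +ᵥ K) ⊆ {a + b} := by
    rintro _ ⟨⟨l, hl, rfl⟩, ⟨k, hk, hkl⟩⟩
    have : b ≤ l := csInf_le hL.bddBelow hl
    have : k ≤ a := le_csSup hK.bddAbove hk
    simp only [vadd_eq_add] at hkl
    simp only [vadd_eq_add, mem_singleton_iff]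
    linarith
  calc volume K + volume L = volume (a +ᵥ L) + volume (b +ᵥ K) := by
        rw [measure_vadd, measure_vadd, add_comm]
    _ = volume ((a +ᵥ L) ∪ (b +ᵥ K)) + volume ((a +ᵥ L) ∩ (b +ᵥ K)) :=
        (measure_union_add_inter _ (hK.vadd b).measurableSet).symm
    _ ≤ volume (K + L) + volume ({a + b} : Set ℝ) := add_le_add (measure_mono hsub)
        (measure_mono hinter)
    _ = volume (K + L) := by rw [measure_singleton, add_zero]

theorem ofReal_mul_volume_add_le_volume_smul_add {A B : Set ℝ} (hA : MeasurableSet A)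
    (hB : MeasurableSet B) (hA₀ : A.Nonempty) (hB₀ : B.Nonempty) {a b : ℝ} (ha : 0 ≤ a)
    (hb : 0 ≤ b) :
    ENNReal.ofReal a * volume A + ENNReal.ofReal b * volume B ≤ volume (a • A + b • B) := by
  obtain ⟨x, hx⟩ := hA₀
  obtain ⟨y, hy⟩ := hB₀
  have key : ∀ K ⊆ A, IsCompact K → ∀ L ⊆ B, IsCompact L →
      ENNReal.ofReal a * volume K + ENNReal.ofReal b * volume L ≤ volume (a • A + b • B) := by
    intro K hKA hK L hLB hL
    calc ENNReal.ofReal a * volume K + ENNReal.ofReal b * volume L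
        ≤ volume (a • insert x K) + volume (b • insert y L) := by
          rw [Measure.addHaar_smul_of_nonneg _ ha, Measure.addHaar_smul_of_nonneg _ hb]
          simp only [Module.finrank_self, pow_one]
          gcongr <;> exact subset_insert _ _
      _ ≤ volume (a • insert x K + b • insert y L) :=
          volume_add_volume_le_volume_add_of_isCompact ((hK.insert x).smul a)
            ((hL.insert y).smul b) (insert_nonempty _ _).smul_set (insert_nonempty _ _).smul_set
      _ ≤ volume (a • A + b • B) := by
          gcongr
          · exact insert_subset hx hKA
          · exact insert_subset hy hLB
  rw [hA.measure_eq_iSup_isCompact, hB.measure_eq_iSup_isCompact]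
  simp only [ENNReal.mul_iSup, iSup_and']
  exact ENNReal.biSup_add_biSup_le' ⟨∅, ⟨empty_subset _, isCompact_empty⟩⟩
    ⟨∅, ⟨empty_subset _, isCompact_empty⟩⟩ fun K hK L hL => key K hK.1 hK.2 L hL.1 hL.2

end Real

def PrekopaLeindler (E : Type*) [AddCommGroup E] [Module ℝ E] [MeasureSpace E] : Prop :=
  ∀ ⦃a b : ℝ⦄, 0 ≤ a → 0 ≤ b → a + b = 1 → ∀ ⦃f g h : E → ℝ≥0∞⦄,
    Measurable f → Measurable g → Measurable h →
    (∀ y z, f y ^ a * g z ^ b ≤ h (a • y + b • z)) →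
    (∫⁻ y, f y) ^ a * (∫⁻ y, g y) ^ b ≤ ∫⁻ y, h y

theorem prekopaLeindler_of_pos {E : Type*} [AddCommGroup E] [Module ℝ E] [MeasureSpace E]
    (H : ∀ ⦃a b : ℝ⦄, 0 < a → 0 < b → a + b = 1 → ∀ ⦃f g h : E → ℝ≥0∞⦄,
      Measurable f → Measurable g → Measurable h →
      (∀ y z, f y ^ a * g z ^ b ≤ h (a • y + b • z)) →
      (∫⁻ y, f y) ^ a * (∫⁻ y, g y) ^ b ≤ ∫⁻ y, h y) :
    PrekopaLeindler E := by
  intro a b ha hb hab f g h hf hg hh hfgh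
  rcases ha.eq_or_lt with rfl | ha
  · obtain rfl : b = 1 := by linarith
    simpa using lintegral_mono fun z => by simpa using hfgh 0 z
  rcases hb.eq_or_lt with rfl | hb
  · obtain rfl : a = 1 := by linarith
    simpa using lintegral_mono fun y => by simpa using hfgh y 0
  exact H ha hb hab hf hg hh hfgh

namespace Real

theorem ofReal_mul_lintegral_add_le_lintegral_of_iSup_eq_one {a b : ℝ} (ha : 0 ≤ a)
    (hb : 0 ≤ b) (hab : a + b = 1) {f g h : ℝ → ℝ≥0∞} (hf : Measurable f)
    (hg : Measurable g) (hh : Measurable h) (hf₁ : ⨆ y, f y = 1) (hg₁ : ⨆ y, g y = 1)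
    (hfgh : ∀ y z, f y ^ a * g z ^ b ≤ h (a • y + b • z)) :
    ENNReal.ofReal a * (∫⁻ y, f y) + ENNReal.ofReal b * ∫⁻ y, g y ≤ ∫⁻ y, h y := by
  have level : ∀ t ∈ Ioi (0 : ℝ), ENNReal.ofReal a * volume {y | ENNReal.ofReal t < f y}
      + ENNReal.ofReal b * volume {y | ENNReal.ofReal t < g y}
      ≤ volume {y | ENNReal.ofReal t < h y} := by
    intro t ht
    rcases lt_or_ge t 1 with ht₁ | ht₁
    · have hlt : ENNReal.ofReal t < 1 := ENNReal.ofReal_lt_one.mpr ht₁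
      have hf₀ : {y | ENNReal.ofReal t < f y}.Nonempty :=
        lt_iSup_iff.mp (hf₁.symm ▸ hlt : ENNReal.ofReal t < ⨆ y, f y)
      have hg₀ : {y | ENNReal.ofReal t < g y}.Nonempty :=
        lt_iSup_iff.mp (hg₁.symm ▸ hlt : ENNReal.ofReal t < ⨆ y, g y)
      refine (ofReal_mul_volume_add_le_volume_smul_add (measurableSet_lt measurable_const hf)
        (measurableSet_lt measurable_const hg) hf₀ hg₀ ha hb).trans (measure_mono ?_)
      rintro _ ⟨_, ⟨y, hy, rfl⟩, _, ⟨z, hz, rfl⟩, rfl⟩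
      exact (lt_min hy hz).trans_le
        ((ENNReal.min_le_rpow_mul_rpow ha hb hab _ _).trans (hfgh y z))
    · have hempty : ∀ u : ℝ → ℝ≥0∞, ⨆ y, u y = 1 → {y | ENNReal.ofReal t < u y} = ∅ :=
        fun u hu => eq_empty_of_forall_notMem fun y hy => (hy.trans_le
          ((le_iSup u y).trans_eq hu)).not_ge (ENNReal.one_le_ofReal.mpr ht₁)
      simp [hempty f hf₁, hempty g hg₁]
  calc ENNReal.ofReal a * (∫⁻ y, f y) + ENNReal.ofReal b * ∫⁻ y, g y
      = (∫⁻ t in Ioi 0, ENNReal.ofReal a * volume {y | ENNReal.ofReal t < f y}) +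
          ∫⁻ t in Ioi 0, ENNReal.ofReal b * volume {y | ENNReal.ofReal t < g y} := by
        rw [lintegral_eq_lintegral_meas_ofReal_lt _ hf, lintegral_eq_lintegral_meas_ofReal_lt _ hg,
          lintegral_const_mul' _ _ ENNReal.ofReal_ne_top,
          lintegral_const_mul' _ _ ENNReal.ofReal_ne_top]
    _ ≤ ∫⁻ t in Ioi 0, volume {y | ENNReal.ofReal t < h y} :=
        (le_lintegral_add _ _).trans (setLIntegral_mono' measurableSet_Ioi level)
    _ = ∫⁻ y, h y := (lintegral_eq_lintegral_meas_ofReal_lt _ hh).symm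

theorem lintegral_rpow_mul_lintegral_rpow_le_of_iSup_ne_top {a b : ℝ} (ha : 0 < a)
    (hb : 0 < b) (hab : a + b = 1) {f g h : ℝ → ℝ≥0∞} (hf : Measurable f)
    (hg : Measurable g) (hh : Measurable h) (hf_top : ⨆ y, f y ≠ ⊤) (hg_top : ⨆ y, g y ≠ ⊤)
    (hfgh : ∀ y z, f y ^ a * g z ^ b ≤ h (a • y + b • z)) :
    (∫⁻ y, f y) ^ a * (∫⁻ y, g y) ^ b ≤ ∫⁻ y, h y := by
  set α := ⨆ y, f y
  set β := ⨆ y, g y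
  rcases eq_or_ne α 0 with hα | hα
  · have : ∫⁻ y, f y = 0 := by simp [ENNReal.iSup_eq_zero.mp hα]
    simp [this, ENNReal.zero_rpow_of_pos ha]
  rcases eq_or_ne β 0 with hβ | hβ
  · have : ∫⁻ y, g y = 0 := by simp [ENNReal.iSup_eq_zero.mp hβ]
    simp [this, ENNReal.zero_rpow_of_pos hb]
  set c := α⁻¹ ^ a * β⁻¹ ^ b
  have hc₀ : c ≠ 0 := mul_ne_zero (ENNReal.rpow_pos (by simpa) (by simpa)).ne'
    (ENNReal.rpow_pos (by simpa) (by simpa)).ne'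
  have hc_top : c ≠ ⊤ := ENNReal.mul_ne_top (ENNReal.rpow_ne_top_of_nonneg ha.le (by simpa))
    (ENNReal.rpow_ne_top_of_nonneg hb.le (by simpa))
  have key := ofReal_mul_lintegral_add_le_lintegral_of_iSup_eq_one ha.le hb.le hab
    (hf.const_mul α⁻¹) (hg.const_mul β⁻¹) (hh.const_mul c)
    (by rw [← ENNReal.mul_iSup, ENNReal.inv_mul_cancel hα hf_top])
    (by rw [← ENNReal.mul_iSup, ENNReal.inv_mul_cancel hβ hg_top])
    fun y z => by
      rw [ENNReal.mul_rpow_of_nonneg _ _ ha.le, ENNReal.mul_rpow_of_nonneg _ _ hb.le,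
        mul_mul_mul_comm]
      exact mul_le_mul_right (hfgh y z) c
  rw [lintegral_const_mul _ hf, lintegral_const_mul _ hg, lintegral_const_mul _ hh] at key
  rw [← ENNReal.mul_le_mul_iff_right hc₀ hc_top]
  calc c * ((∫⁻ y, f y) ^ a * (∫⁻ y, g y) ^ b)
      = (α⁻¹ * ∫⁻ y, f y) ^ a * (β⁻¹ * ∫⁻ y, g y) ^ b := by
        rw [ENNReal.mul_rpow_of_nonneg _ _ ha.le, ENNReal.mul_rpow_of_nonneg _ _ hb.le,
          mul_mul_mul_comm]
    _ ≤ ENNReal.ofReal a * (α⁻¹ * ∫⁻ y, f y) + ENNReal.ofReal b * (β⁻¹ * ∫⁻ y, g y) :=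
        ENNReal.geom_mean_le_arith_mean2_weighted ha.le hb.le hab _ _
    _ ≤ c * ∫⁻ y, h y := key

theorem prekopaLeindler : PrekopaLeindler ℝ := by
  refine prekopaLeindler_of_pos fun a b ha hb hab f g h hf hg hh hfgh => ?_
  have hmono : ∀ u : ℝ → ℝ≥0∞, Monotone fun n : ℕ => ∫⁻ y, min (u y) n :=
    fun u m n hmn => lintegral_mono fun y => min_le_min_left _ (by exact_mod_cast hmn)
  have hsup : ∀ u : ℝ → ℝ≥0∞, Measurable u → ∫⁻ y, u y = ⨆ n : ℕ, ∫⁻ y, min (u y) n := by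
    intro u hu
    rw [← lintegral_iSup (fun n => hu.min measurable_const)
      fun m n hmn y => min_le_min_left _ (by exact_mod_cast hmn)]
    simp_rw [← inf_iSup_eq, ENNReal.iSup_natCast, inf_top_eq]
  have htrunc : ∀ n : ℕ, (∫⁻ y, min (f y) n) ^ a * (∫⁻ y, min (g y) n) ^ b ≤ ∫⁻ y, h y := fun n =>
    lintegral_rpow_mul_lintegral_rpow_le_of_iSup_ne_top ha hb hab (hf.min measurable_const)
      (hg.min measurable_const) hh
      (ne_top_of_le_ne_top (ENNReal.natCast_ne_top n) (iSup_le fun _ => min_le_right _ _))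
      (ne_top_of_le_ne_top (ENNReal.natCast_ne_top n) (iSup_le fun _ => min_le_right _ _))
      fun y z => (mul_le_mul' (ENNReal.rpow_le_rpow (min_le_left _ _) ha.le)
        (ENNReal.rpow_le_rpow (min_le_left _ _) hb.le)).trans (hfgh y z)
  rw [hsup f hf, hsup g hg, ENNReal.iSup_rpow _ ha, ENNReal.iSup_rpow _ hb, ENNReal.iSup_mul]
  refine iSup_le fun m => ?_
  rw [ENNReal.mul_iSup]
  refine iSup_le fun n => (mul_le_mul' ?_ ?_).trans (htrunc (max m n))
  · exact ENNReal.rpow_le_rpow (hmono f (le_max_left m n)) ha.le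
  · exact ENNReal.rpow_le_rpow (hmono g (le_max_right m n)) hb.le

end Real

namespace PrekopaLeindler

variable {E F : Type*} [AddCommGroup E] [Module ℝ E] [MeasureSpace E]
  [AddCommGroup F] [Module ℝ F] [MeasureSpace F]

theorem prod [SFinite (volume : Measure E)] [SFinite (volume : Measure F)]
    (hE : PrekopaLeindler E) (hF : PrekopaLeindler F) : PrekopaLeindler (E × F) := by
  intro a b ha hb hab f g h hf hg hh hfgh
  have fiber : ∀ x z, (∫⁻ y, f (x, y)) ^ a * (∫⁻ y, g (z, y)) ^ b ≤
      ∫⁻ y, h (a • x + b • z, y) := fun x z =>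
    hF ha hb hab (hf.comp measurable_prodMk_left) (hg.comp measurable_prodMk_left)
      (hh.comp measurable_prodMk_left) fun y w => hfgh (x, y) (z, w)
  simpa only [Measure.volume_eq_prod, lintegral_prod _ hf.aemeasurable,
    lintegral_prod _ hg.aemeasurable, lintegral_prod _ hh.aemeasurable] using
    hE ha hb hab hf.lintegral_prod_right' hg.lintegral_prod_right' hh.lintegral_prod_right' fiber

theorem of_measurePreserving (e : F →ₗ[ℝ] E) (he : MeasurePreserving e) (hF : PrekopaLeindler F) :
    PrekopaLeindler E := by
  intro a b ha hb hab f g h hf hg hh hfgh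
  rw [← he.lintegral_comp hf, ← he.lintegral_comp hg, ← he.lintegral_comp hh]
  refine hF ha hb hab (hf.comp he.measurable) (hg.comp he.measurable) (hh.comp he.measurable)
    fun y z => ?_
  simpa only [Function.comp_apply, map_add, map_smul] using hfgh (e y) (e z)

end PrekopaLeindler

theorem prekopaLeindler_fin_arrow (n : ℕ) : PrekopaLeindler (Fin n → ℝ) := by
  induction n with
  | zero =>
    refine prekopaLeindler_of_pos fun a b ha hb _ f g h _ _ _ hfgh => ?_
    have hvol : (volume : Measure (Fin 0 → ℝ)) univ = 1 := by simp [volume_pi]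
    rw [lintegral_unique, lintegral_unique, lintegral_unique, hvol, mul_one, mul_one, mul_one]
    convert hfgh default default
  | succ n ih =>
    refine (Real.prekopaLeindler.prod ih).of_measurePreserving
      (Fin.consLinearEquiv ℝ fun _ : Fin (n + 1) => ℝ).toLinearMap ?_
    have hcons : ⇑(Fin.consLinearEquiv ℝ fun _ : Fin (n + 1) => ℝ) =
        (MeasurableEquiv.piFinSuccAbove (fun _ : Fin (n + 1) => ℝ) 0).symm := by
      ext p i
      simp [MeasurableEquiv.piFinSuccAbove]
    rw [LinearEquiv.coe_coe, hcons]
    exact (volume_preserving_piFinSuccAbove (fun _ : Fin (n + 1) => ℝ) 0).symm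

theorem prekopaLeindler_pi (ι : Type*) [Fintype ι] : PrekopaLeindler (ι → ℝ) :=
  (prekopaLeindler_fin_arrow _).of_measurePreserving
    (LinearEquiv.piCongrLeft ℝ (fun _ => ℝ) (Fintype.equivFin ι).symm).toLinearMap
    (volume_measurePreserving_piCongrLeft (fun _ => ℝ) (Fintype.equivFin ι).symm)

theorem EuclideanSpace.prekopaLeindler (ι : Type*) [Fintype ι] :
    PrekopaLeindler (EuclideanSpace ℝ ι) :=
  (prekopaLeindler_pi ι).of_measurePreserving (WithLp.linearEquiv 2 ℝ (ι → ℝ)).symm.toLinearMap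
    (PiLp.volume_preserving_toLp ι)

theorem ENNReal.ofReal_exp_neg_rpow_mul_rpow {a b : ℝ} (ha : 0 ≤ a) (hb : 0 ≤ b) (u v : ℝ) :
    ENNReal.ofReal (Real.exp (-u)) ^ a * ENNReal.ofReal (Real.exp (-v)) ^ b =
      ENNReal.ofReal (Real.exp (-(a * u + b * v))) := by
  rw [ENNReal.ofReal_rpow_of_nonneg (Real.exp_nonneg _) ha,
    ENNReal.ofReal_rpow_of_nonneg (Real.exp_nonneg _) hb, ← Real.exp_mul, ← Real.exp_mul,
    ← ENNReal.ofReal_mul (Real.exp_nonneg _), ← Real.exp_add]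
  ring_nf

theorem PrekopaLeindler.lintegral_exp_neg_rpow_mul_rpow_le {E F : Type*} [AddCommGroup E]
    [Module ℝ E] [AddCommGroup F] [Module ℝ F] [MeasureSpace F] (hF : PrekopaLeindler F)
    {φ : E × F → ℝ} (hφ : ConvexOn ℝ univ φ) (hφ_meas : ∀ x, Measurable fun y => φ (x, y))
    {a b : ℝ} (ha : 0 ≤ a) (hb : 0 ≤ b) (hab : a + b = 1) (x₀ x₁ : E) :
    (∫⁻ y, ENNReal.ofReal (Real.exp (-φ (x₀, y)))) ^ a *
        (∫⁻ y, ENNReal.ofReal (Real.exp (-φ (x₁, y)))) ^ b ≤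
      ∫⁻ y, ENNReal.ofReal (Real.exp (-φ (a • x₀ + b • x₁, y))) := by
  have hmeas : ∀ x, Measurable fun y => ENNReal.ofReal (Real.exp (-φ (x, y))) := fun x =>
    ENNReal.measurable_ofReal.comp (Real.measurable_exp.comp (hφ_meas x).neg)
  refine hF ha hb hab (hmeas x₀) (hmeas x₁) (hmeas _) fun y z => ?_
  rw [ENNReal.ofReal_exp_neg_rpow_mul_rpow ha hb]
  exact ENNReal.ofReal_le_ofReal (Real.exp_le_exp.mpr (neg_le_neg
    (hφ.2 (mem_univ (x₀, y)) (mem_univ (x₁, z)) ha hb hab)))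

/-- (Prékopa's theorem, scalar case.)  Let `φ : ℝᵐ × ℝⁿ → ℝ` be convex and
suppose `e^{−ψ(x)} = ∫_{ℝⁿ} e^{−φ(x,y)} dy` is finite for all `x` (i.e. the integrand is
integrable).  Then `ψ` is convex on `ℝᵐ`. -/
theorem prekopa_scalar {m n : ℕ}
    (φ : EuclideanSpace ℝ (Fin m) × EuclideanSpace ℝ (Fin n) → ℝ)
    (hφ : ConvexOn ℝ Set.univ φ)
    (hint : ∀ x : EuclideanSpace ℝ (Fin m),
        Integrable (fun y : EuclideanSpace ℝ (Fin n) => Real.exp (-φ (x, y))) volume)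
    (ψ : EuclideanSpace ℝ (Fin m) → ℝ)
    (hψ : ∀ x : EuclideanSpace ℝ (Fin m),
        Real.exp (-ψ x) = ∫ y : EuclideanSpace ℝ (Fin n), Real.exp (-φ (x, y)) ∂volume) :
    ConvexOn ℝ Set.univ ψ := by
  have hφ_cont : Continuous φ := continuousOn_univ.mp (hφ.continuousOn isOpen_univ)
  have hψ_lintegral : ∀ x, ENNReal.ofReal (Real.exp (-ψ x)) =
      ∫⁻ y, ENNReal.ofReal (Real.exp (-φ (x, y))) := fun x => by
    rw [hψ x, ofReal_integral_eq_lintegral_ofReal (hint x)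
      (Filter.Eventually.of_forall fun y => (Real.exp_pos _).le)]
  refine ⟨convex_univ, fun x₀ _ x₁ _ a b ha hb hab => ?_⟩
  have key := (EuclideanSpace.prekopaLeindler (Fin n)).lintegral_exp_neg_rpow_mul_rpow_le hφ
    (fun x => (hφ_cont.comp (Continuous.prodMk_right x)).measurable) ha hb hab x₀ x₁
  rw [← hψ_lintegral, ← hψ_lintegral, ← hψ_lintegral, ENNReal.ofReal_exp_neg_rpow_mul_rpow ha hb,
    ENNReal.ofReal_le_ofReal_iff (Real.exp_pos _).le, Real.exp_le_exp, neg_le_neg_iff] at key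
  simpa only [smul_eq_mul] using key
end
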